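/- Let λ, μ, be reals with λ ≠ 0, let η ∈ ℝ² be nonzero, and for u ∈ ℝ let A(u) be the 2×2 matrix with rows (λ, -(μ-u)) and (μ-u, λ). Then for every u, the point v(u) = -u·A(u)⁻¹η satisfies |v(u) - ζ| = R, where ζ = -(1/2)((μ/λ)η + η*), R = (1/2)·√((μ² + λ²)/λ²)·|η|, and η* = θη with θ the 2×2 rotation matrix with rows (0,-1) and (1,0). -/

import Mathlib

/-!
Identify `ℝ²` with `ℂ` through the basis `1, I`: the matrix with rows `(x, -y), (y, x)` is
multiplication by `x + y I`. Then `θ` is `I`, `A(u)` is `a = λ + (μ - u) I`, and with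
`b = μ/λ + I` one gets `v(u) - ζ = (b/2 - u/a) η`. Since `Re (b a) = u`,
`b/2 - u/a = -conj (b a) / (2 a)`, a complex number of modulus `|b|/2`, independent of `u`.
-/

noncomputable section
open Real Matrix

/-- Inclusion of `Fin 2 → ℝ` into the Euclidean plane, to use the Euclidean norm. -/
def toV (x : Fin 2 → ℝ) : EuclideanSpace ℝ (Fin 2) := WithLp.toLp 2 x

/-- The rotation generator `θ`. -/
def th : Matrix (Fin 2) (Fin 2) ℝ := !![0, -1; 1, 0]

open Complex ComplexConjugate

local notation "cmat" => Algebra.leftMulMatrix Complex.basisOneI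

lemma toV_basisOneI_repr (z : ℂ) : toV (basisOneI.repr z) = orthonormalBasisOneI.repr z := by
  ext i; fin_cases i <;> simp [toV]

lemma norm_toV_leftMulMatrix_mulVec (w : ℂ) (x : Fin 2 → ℝ) :
    ‖toV (cmat w *ᵥ x)‖ = ‖w‖ * ‖toV x‖ := by
  obtain ⟨z, rfl⟩ : ∃ z : ℂ, ⇑(basisOneI.repr z) = x :=
    ⟨x 0 + x 1 * I, by ext i; fin_cases i <;> simp⟩
  rw [Algebra.leftMulMatrix_mulVec_repr, toV_basisOneI_repr, toV_basisOneI_repr,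
    LinearIsometryEquiv.norm_map, LinearIsometryEquiv.norm_map, norm_mul]

lemma inv_leftMulMatrix {z : ℂ} (hz : z ≠ 0) : (cmat z)⁻¹ = cmat z⁻¹ :=
  Matrix.inv_eq_left_inv (by rw [← map_mul, inv_mul_cancel₀ hz, map_one])

lemma th_eq_leftMulMatrix_I : th = cmat I := by
  rw [Algebra.leftMulMatrix_complex]; simp [th]

lemma norm_half_sub_re_mul_div (b : ℂ) {a : ℂ} (ha : a ≠ 0) :
    ‖b / 2 - (b * a).re / a‖ = ‖b‖ / 2 := by
  have : b / 2 - (b * a).re / a = -conj (b * a) / (2 * a) := by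
    rw [re_eq_add_conj]; field_simp; ring
  rw [this, norm_div, norm_neg, Complex.norm_conj, norm_mul, norm_mul, Complex.norm_two]
  field_simp [norm_ne_zero_iff.mpr ha]

theorem stmt5 (lam mu : ℝ) (hlam : lam ≠ 0) (eta : Fin 2 → ℝ)
    (A : ℝ → Matrix (Fin 2) (Fin 2) ℝ)
    (hA : ∀ u, A u = !![lam, -(mu - u); mu - u, lam])
    (v : ℝ → Fin 2 → ℝ) (hv : ∀ u, v u = (-u) • ((A u)⁻¹.mulVec eta))
    (etaStar : Fin 2 → ℝ) (hetaStar : etaStar = th.mulVec eta)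
    (zeta : Fin 2 → ℝ) (hzeta : zeta = (-(1/2 : ℝ)) • ((mu / lam) • eta + etaStar))
    (R : ℝ) (hR : R = (1/2) * Real.sqrt ((mu ^ 2 + lam ^ 2) / lam ^ 2) * ‖toV eta‖) :
    ∀ u, ‖toV (v u - zeta)‖ = R := by
  intro u
  set a : ℂ := ⟨lam, mu - u⟩
  set b : ℂ := (mu / lam : ℝ) + I
  have ha : a ≠ 0 := fun h => hlam (congrArg re h)
  have hba : (b * a).re = u := by
    simp only [b, a, mul_re, add_re, add_im, ofReal_re, ofReal_im, I_re, I_im]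
    field_simp; ring
  have hA' : A u = cmat a := by rw [hA, Algebra.leftMulMatrix_complex]
  have hvz : v u - zeta = cmat (b / 2 - (b * a).re / a) *ᵥ eta := by
    have hw : b / 2 - (b * a).re / a = (1 / 2 : ℝ) • ((mu / lam : ℝ) • 1 + I) - u • a⁻¹ := by
      simp only [b, hba, real_smul, mul_one]; push_cast; ring
    rw [hw, hv, hzeta, hetaStar, hA', th_eq_leftMulMatrix_I, inv_leftMulMatrix ha]
    simp only [map_sub, map_smul, map_add, map_one, sub_mulVec, add_mulVec, smul_mulVec,
      one_mulVec]
    module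
  have hb : ‖b‖ = √((mu ^ 2 + lam ^ 2) / lam ^ 2) := by
    rw [show b = (mu / lam : ℝ) + (1 : ℝ) * I by simp [b], norm_add_mul_I]
    congr 1; field_simp
  rw [hvz, norm_toV_leftMulMatrix_mulVec, norm_half_sub_re_mul_div b ha, hb, hR]
  ring
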